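/- With V_μ the linear operator on polynomials defined by V_μ(x^{2n+ε}) = [(1/2)_{n+ε}/(μ+1/2)_{n+ε}] x^{2n+ε} (ε ∈ {0,1}), and the generalized Hermite polynomials defined by H^μ_{2n+ε}(x) = [(-1)^n (2n+ε)! / (μ+1/2)_{n+ε}] x^ε L_n^{μ-1/2+ε}(x^2) with L_n^α the Laguerre polynomial, one has V_μ H_{2n+ε}(x) = H^μ_{2n+ε}(x) for all n ≥ 0 and ε ∈ {0,1}, where H_n is the physicists' Hermite polynomial. -/

import Mathlib

/-!
Expand both sides in powers of `x`, with coefficients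
`c_a(n, ε, k) = (-1)^n (2n+ε)! / n! · (-n)_k / ((a)_{k+ε} k!)`.
The Hermite polynomial is `H_{2n+ε} = Σ_k c_{1/2}(n, ε, k) x^{2k+ε}`, by the three-term recurrence
taken one parity at a time; the factor `(-n)_k` vanishes for `k > n`, so the coefficient
recurrences hold for every `k` without boundary cases. `V_μ` multiplies the coefficient of
`x^{2k+ε}` by `(1/2)_{k+ε} / (μ+1/2)_{k+ε}`, turning `c_{1/2}` into `c_{μ+1/2}`, and
`(a)_{m+ε} = (a)_ε (a+ε)_m` shows that the Laguerre side is `Σ_k c_{μ+1/2}(n, ε, k) x^{2k+ε}` too.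
-/

open Polynomial in
noncomputable def hermiteP : ℕ → Polynomial ℝ
  | 0 => 1
  | 1 => 2 * X
  | (n + 2) => 2 * X * hermiteP (n + 1) - C (2 * ((n : ℝ) + 1)) * hermiteP n

open Polynomial in
noncomputable def laguerreP (α : ℝ) (n : ℕ) : Polynomial ℝ :=
  C ((ascPochhammer ℝ n).eval (α + 1) / (Nat.factorial n : ℝ)) *
    ∑ k ∈ Finset.range (n + 1),
      C ((ascPochhammer ℝ k).eval (-(n : ℝ))
          / ((ascPochhammer ℝ k).eval (α + 1) * (Nat.factorial k : ℝ))) * X^k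


open Finset Polynomial

theorem ascPochhammer_eval_add {R : Type*} [CommSemiring R] (a : R) (m n : ℕ) :
    (ascPochhammer R (m + n)).eval a
      = (ascPochhammer R m).eval a * (ascPochhammer R n).eval (a + m) := by
  rw [← ascPochhammer_mul, eval_mul, eval_comp, eval_add, eval_X, eval_natCast]

theorem ascPochhammer_succ_eval_left {R : Type*} [CommSemiring R] (a : R) (n : ℕ) :
    (ascPochhammer R (n + 1)).eval a = a * (ascPochhammer R n).eval (a + 1) := by
  rw [add_comm, ascPochhammer_eval_add, ascPochhammer_one, eval_X, Nat.cast_one]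

noncomputable def genHermiteCoeff (a : ℝ) (n ε k : ℕ) : ℝ :=
  (-1) ^ n * ((2 * n + ε).factorial : ℝ) / n.factorial * (ascPochhammer ℝ k).eval (-(n : ℝ))
    / ((ascPochhammer ℝ (k + ε)).eval a * k.factorial)

/-- `genHermite (μ + 1/2) n ε` is `H^μ_{2n+ε}`, and `genHermite (1/2) n ε` is `H_{2n+ε}`. -/
noncomputable def genHermite (a : ℝ) (n ε : ℕ) : ℝ[X] :=
  ∑ k ∈ range (n + 1), C (genHermiteCoeff a n ε k) * X ^ (2 * k + ε)

theorem genHermiteCoeff_succ_self (a : ℝ) (n ε : ℕ) : genHermiteCoeff a n ε (n + 1) = 0 := by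
  simp [genHermiteCoeff, ascPochhammer_eval_neg_coe_nat_of_lt (Nat.lt_succ_self n)]

theorem genHermite_eq_sum_range_succ (a : ℝ) (n ε : ℕ) :
    genHermite a n ε = ∑ k ∈ range (n + 2), C (genHermiteCoeff a n ε k) * X ^ (2 * k + ε) := by
  rw [sum_range_succ, genHermiteCoeff_succ_self, C_0, zero_mul, add_zero, genHermite]

theorem genHermiteCoeff_succ_zero_zero (a : ℝ) (n : ℕ) :
    genHermiteCoeff a (n + 1) 0 0 = -(2 * (2 * n + 1) * genHermiteCoeff a n 0 0) := by
  simp only [genHermiteCoeff, ascPochhammer_zero, eval_one, Nat.factorial_zero, Nat.add_zero]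
  rw [show 2 * (n + 1) = 2 * n + 1 + 1 by ring, Nat.factorial_succ, Nat.factorial_succ,
    Nat.factorial_succ]
  push_cast
  field_simp
  ring

theorem genHermiteCoeff_succ_zero_succ (a : ℝ) (n k : ℕ) :
    genHermiteCoeff a (n + 1) 0 (k + 1)
      = 2 * genHermiteCoeff a n 1 k - 2 * (2 * n + 1) * genHermiteCoeff a n 0 (k + 1) := by
  rcases eq_or_ne ((ascPochhammer ℝ (k + 1)).eval a) 0 with ha | ha
  · simp [genHermiteCoeff, ha]
  have hshift := ascPochhammer_succ_eval_left (-((n : ℝ) + 1)) k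
  rw [show -((n : ℝ) + 1) + 1 = -n by ring] at hshift
  simp only [genHermiteCoeff, Nat.add_zero]
  rw [show 2 * (n + 1) = 2 * n + 1 + 1 by ring, Nat.factorial_succ, Nat.factorial_succ,
    Nat.factorial_succ, Nat.factorial_succ, ascPochhammer_succ_eval k (-(n : ℝ))]
  push_cast
  rw [hshift]
  field_simp
  ring

theorem genHermiteCoeff_half_succ_one (n k : ℕ) :
    genHermiteCoeff (1 / 2) (n + 1) 1 k
      = 2 * genHermiteCoeff (1 / 2) (n + 1) 0 k
        - 2 * (2 * n + 2) * genHermiteCoeff (1 / 2) n 1 k := by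
  have hneg : (ascPochhammer ℝ k).eval (-((n : ℝ) + 1)) * (k - n - 1)
      = -(n + 1) * (ascPochhammer ℝ k).eval (-(n : ℝ)) := by
    have h := ascPochhammer_succ_eval_left (-((n : ℝ) + 1)) k
    rw [ascPochhammer_succ_eval, show -((n : ℝ) + 1) + 1 = -n by ring] at h
    linear_combination h
  have hhalf := ascPochhammer_succ_eval k (1 / 2 : ℝ)
  have hpos : (ascPochhammer ℝ k).eval (1 / 2 : ℝ) ≠ 0 := (ascPochhammer_pos k _ (by norm_num)).ne'
  simp only [genHermiteCoeff, Nat.add_zero]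
  rw [show 2 * (n + 1) + 1 = 2 * n + 1 + 1 + 1 by ring, show 2 * (n + 1) = 2 * n + 1 + 1 by ring,
    Nat.factorial_succ, Nat.factorial_succ, Nat.factorial_succ, Nat.factorial_succ, hhalf]
  push_cast
  field_simp
  linear_combination 4 * (n + 1) * (-1) ^ n * hneg

theorem genHermite_succ_zero (a : ℝ) (n : ℕ) :
    genHermite a (n + 1) 0
      = 2 * X * genHermite a n 1 - C (2 * (2 * (n : ℝ) + 1)) * genHermite a n 0 := by
  have hterm : ∀ k, C (genHermiteCoeff a (n + 1) 0 (k + 1)) * X ^ (2 * (k + 1) + 0)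
      = 2 * X * (C (genHermiteCoeff a n 1 k) * X ^ (2 * k + 1))
        - C (2 * (2 * (n : ℝ) + 1))
          * (C (genHermiteCoeff a n 0 (k + 1)) * X ^ (2 * (k + 1) + 0)) := by
    intro k
    rw [genHermiteCoeff_succ_zero_succ, map_sub, map_mul, map_mul, map_ofNat]
    ring
  rw [genHermite, sum_range_succ', sum_congr rfl fun k _ => hterm k, sum_sub_distrib, ← mul_sum,
    ← mul_sum, genHermite, genHermite_eq_sum_range_succ a n 0, sum_range_succ' _ (n + 1),
    genHermiteCoeff_succ_zero_zero]
  simp only [map_neg, map_mul]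
  ring

theorem genHermite_half_succ_one (n : ℕ) :
    genHermite (1 / 2) (n + 1) 1
      = 2 * X * genHermite (1 / 2) (n + 1) 0
        - C (2 * (2 * (n : ℝ) + 2)) * genHermite (1 / 2) n 1 := by
  have hterm : ∀ k, C (genHermiteCoeff (1 / 2) (n + 1) 1 k) * X ^ (2 * k + 1)
      = 2 * X * (C (genHermiteCoeff (1 / 2) (n + 1) 0 k) * X ^ (2 * k + 0))
        - C (2 * (2 * (n : ℝ) + 2)) * (C (genHermiteCoeff (1 / 2) n 1 k) * X ^ (2 * k + 1)) := by
    intro k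
    rw [genHermiteCoeff_half_succ_one, map_sub, map_mul, map_mul, map_ofNat]
    ring
  rw [genHermite, sum_congr rfl fun k _ => hterm k, sum_sub_distrib, ← mul_sum, ← mul_sum,
    genHermite, genHermite_eq_sum_range_succ _ n 1]

theorem hermiteP_eq_genHermite_half (n : ℕ) :
    hermiteP (2 * n) = genHermite (1 / 2) n 0 ∧ hermiteP (2 * n + 1) = genHermite (1 / 2) n 1 := by
  induction n with
  | zero =>
    constructor <;> norm_num [hermiteP, genHermite, genHermiteCoeff, C_ofNat]
  | succ n ih =>
    have heven : hermiteP (2 * (n + 1)) = genHermite (1 / 2) (n + 1) 0 := by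
      rw [show 2 * (n + 1) = 2 * n + 2 by ring, hermiteP, genHermite_succ_zero, ← ih.1, ← ih.2]
      push_cast
      ring
    refine ⟨heven, ?_⟩
    rw [show 2 * (n + 1) + 1 = 2 * n + 1 + 2 by ring, hermiteP, genHermite_half_succ_one, ← heven,
      ← ih.2, show 2 * n + 1 + 1 = 2 * (n + 1) by ring]
    push_cast
    rw [add_assoc, one_add_one_eq_two]

theorem apply_genHermite {V : ℝ[X] →ₗ[ℝ] ℝ[X]} {a b : ℝ} {ε : ℕ}
    (hV : ∀ k, V (X ^ (2 * k + ε)) = C ((ascPochhammer ℝ (k + ε)).eval b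
      / (ascPochhammer ℝ (k + ε)).eval a) * X ^ (2 * k + ε))
    (hb : ∀ k, (ascPochhammer ℝ (k + ε)).eval b ≠ 0) (n : ℕ) :
    V (genHermite b n ε) = genHermite a n ε := by
  simp only [genHermite, map_sum]
  refine sum_congr rfl fun k _ => ?_
  rw [← smul_eq_C_mul, map_smul, hV, smul_eq_C_mul, ← mul_assoc, ← C_mul, genHermiteCoeff,
    genHermiteCoeff]
  congr 2
  field_simp [hb k]

theorem C_mul_X_pow_mul_laguerreP_comp_X_sq {a : ℝ} {n ε : ℕ}
    (ha : (ascPochhammer ℝ n).eval (a + ε) ≠ 0) :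
    C ((-1) ^ n * ((2 * n + ε).factorial : ℝ) / (ascPochhammer ℝ (n + ε)).eval a) * X ^ ε
      * (laguerreP (a - 1 + ε) n).comp (X ^ 2) = genHermite a n ε := by
  rw [laguerreP, show a - 1 + ε + 1 = a + ε by ring, mul_comp, C_comp, Polynomial.sum_comp,
    genHermite, mul_sum, mul_sum]
  refine sum_congr rfl fun k _ => ?_
  have hcoeff : genHermiteCoeff a n ε k
      = (-1) ^ n * ((2 * n + ε).factorial : ℝ) / (ascPochhammer ℝ (n + ε)).eval a
        * ((ascPochhammer ℝ n).eval (a + ε) / (n.factorial : ℝ)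
          * ((ascPochhammer ℝ k).eval (-(n : ℝ))
            / ((ascPochhammer ℝ k).eval (a + ε) * (k.factorial : ℝ)))) := by
    rw [genHermiteCoeff, add_comm n ε, add_comm k ε, ascPochhammer_eval_add,
      ascPochhammer_eval_add]
    field_simp
  simp only [hcoeff, mul_comp, C_comp, pow_comp, X_comp, C_mul, pow_add, ← pow_mul]
  ring

theorem dunkl_intertwiner_hermite_eq_generalized_hermite (μ : ℝ)
    (hμ : ∀ j : ℕ, μ + 1/2 ≠ -(j : ℝ))
    (V : Polynomial ℝ →ₗ[ℝ] Polynomial ℝ)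
    (hV : ∀ m ε : ℕ, ε ≤ 1 →
      V (X^(2*m + ε))
        = C ((ascPochhammer ℝ (m + ε)).eval (1/2)
              / (ascPochhammer ℝ (m + ε)).eval (μ + 1/2)) * X^(2*m + ε))
    (n ε : ℕ) (hε : ε ≤ 1) :
    V (hermiteP (2*n + ε))
    = C ((-1)^n * ((2*n + ε).factorial : ℝ)
          / (ascPochhammer ℝ (n + ε)).eval (μ + 1/2))
        * X^ε * (laguerreP (μ - 1/2 + ε) n).comp (X^2) := by
  have hhermite : hermiteP (2 * n + ε) = genHermite (1 / 2) n ε := by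
    interval_cases ε
    exacts [(hermiteP_eq_genHermite_half n).1, (hermiteP_eq_genHermite_half n).2]
  have hhalf : ∀ k, (ascPochhammer ℝ (k + ε)).eval (1 / 2 : ℝ) ≠ 0 :=
    fun k => (ascPochhammer_pos _ _ (by norm_num)).ne'
  have hpoch : (ascPochhammer ℝ n).eval (μ + 1 / 2 + ε) ≠ 0 := by
    rw [Ne, ascPochhammer_eval_eq_zero_iff]
    rintro ⟨j, -, hj⟩
    exact hμ (j + ε) (by push_cast; linarith)
  rw [hhermite, apply_genHermite (fun k => hV k ε hε) hhalf,
    show μ - 1 / 2 + (ε : ℝ) = μ + 1 / 2 - 1 + ε by ring, C_mul_X_pow_mul_laguerreP_comp_X_sq hpoch]
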